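/- arXiv:1605.07084 — 2 statements merged into one kernel-verified Lean document; each statement's English description precedes it below -/
import Mathlib

section
/- Let f : {0,1}^n → {0,1} with an unambiguous collection U of 1-certificates, and for each x ∈ f⁻¹(1) let p_x be the unique element of U consistent with x. Define f' : {0,1}^{3n} → {0,1} by f'(x,y,z) = 1 iff f(x)=f(y)=f(z)=1 and p_x = p_y = p_z. Then every 0-input of f' has sensitivity at most 1, i.e., s_0(f') ≤ 1. -/
/-- A partial assignment `p` is consistent with an input `x`. -/
def Consistent {ι : Type*} (p : ι → Option Bool) (x : ι → Bool) : Prop :=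
  ∀ i b, p i = some b → x i = b

/-- Number of non-`*` entries of a partial assignment. -/
noncomputable def suppCard {ι : Type*} [Fintype ι] (p : ι → Option Bool) : ℕ :=
  Set.ncard {i : ι | p i ≠ none}

/-- `U` is an unambiguous collection of `b`-certificates for `f`. -/
def UnambColl {ι : Type*} (f : (ι → Bool) → Bool) (b : Bool)
    (U : Set (ι → Option Bool)) : Prop :=
  (∀ p ∈ U, ∀ y, Consistent p y → f y = b) ∧
  (∀ x, f x = b → ∃ p ∈ U, Consistent p x) ∧
  (∀ p ∈ U, ∀ q ∈ U, p ≠ q → ¬∃ y, Consistent p y ∧ Consistent q y)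

/-- Unambiguous certificate complexity for the value `b`. -/
noncomputable def UC {ι : Type*} [Fintype ι] (f : (ι → Bool) → Bool) (b : Bool) : ℕ :=
  sInf {m : ℕ | ∃ U, UnambColl f b U ∧ ∀ p ∈ U, suppCard p ≤ m}

/-- Flip one coordinate of an input to `f'`. -/
def flipT {n : ℕ} (w : Fin 3 × Fin n → Bool) (q : Fin 3 × Fin n) :
    Fin 3 × Fin n → Bool :=
  fun r => if r = q then !(w r) else w r

lemma row_flip_ne {n : ℕ} (w : Fin 3 × Fin n → Bool) (jq j : Fin 3) (iq : Fin n)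
    (h : j ≠ jq) : (fun i => flipT w (jq, iq) (j, i)) = fun i => w (j, i) := by
  funext i
  simp [flipT, Prod.ext_iff, h]

lemma row_flip_eq {n : ℕ} (w : Fin 3 × Fin n → Bool) (jq : Fin 3) (iq : Fin n) :
    (fun i => flipT w (jq, iq) (jq, i)) =
      fun i => if i = iq then !(w (jq, i)) else w (jq, i) := by
  funext i
  simp [flipT, Prod.ext_iff]

lemma fin3_third : ∀ a b : Fin 3, ∃ c : Fin 3, c ≠ a ∧ c ≠ b := by decide

/-- The desensitized version `f'` of `f` has `s₀(f') ≤ 1`: every 0-input of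
`f'` has at most one sensitive coordinate. -/
theorem desensitized_s0_le_one {n : ℕ} (f : (Fin n → Bool) → Bool)
    (U : Set (Fin n → Option Bool)) (hU : UnambColl f true U)
    (px : (Fin n → Bool) → (Fin n → Option Bool))
    (hpx : ∀ x, f x = true → px x ∈ U ∧ Consistent (px x) x)
    (f' : (Fin 3 × Fin n → Bool) → Bool)
    (hf' : ∀ w : Fin 3 × Fin n → Bool, f' w = true ↔
      ((∀ j : Fin 3, f (fun i => w (j, i)) = true) ∧
       ∀ j j' : Fin 3, px (fun i => w (j, i)) = px (fun i => w (j', i)))) :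
    ∀ w : Fin 3 × Fin n → Bool, f' w = false →
      Set.ncard {q : Fin 3 × Fin n | f' (flipT w q) ≠ f' w} ≤ 1 := by
  intro w hw
  rw [Set.ncard_le_one_iff (Set.toFinite _)]
  rintro ⟨j1, i1⟩ ⟨j2, i2⟩ hq1 hq2
  by_contra hne
  simp only [Set.mem_setOf_eq, hw] at hq1 hq2
  have h1 : f' (flipT w (j1, i1)) = true := by
    cases h : f' (flipT w (j1, i1)) <;> simp_all
  have h2 : f' (flipT w (j2, i2)) = true := by
    cases h : f' (flipT w (j2, i2)) <;> simp_all
  obtain ⟨A1, B1⟩ := (hf' _).1 h1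
  obtain ⟨A2, B2⟩ := (hf' _).1 h2
  set row : Fin 3 → Fin n → Bool := fun j i => w (j, i) with hrow
  apply absurd hw
  rw [← Bool.not_eq_true] at *
  push_neg
  rw [hf']
  by_cases hj : j1 = j2
  · -- same row, different column
    subst hj
    have hii : i1 ≠ i2 := by
      intro h; subst h; exact hne rfl
    obtain ⟨a, ha, -⟩ := fin3_third j1 j1
    set x1 : Fin n → Bool := fun i => if i = i1 then !(w (j1, i)) else w (j1, i) with hx1
    set x2 : Fin n → Bool := fun i => if i = i2 then !(w (j1, i)) else w (j1, i) with hx2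
    have e1 : (fun i => flipT w (j1, i1) (j1, i)) = x1 := row_flip_eq w j1 i1
    have e2 : (fun i => flipT w (j1, i2) (j1, i)) = x2 := row_flip_eq w j1 i2
    have ea1 : (fun i => flipT w (j1, i1) (a, i)) = row a := row_flip_ne w j1 a i1 ha
    have ea2 : (fun i => flipT w (j1, i2) (a, i)) = row a := row_flip_ne w j1 a i2 ha
    have fx1 : f x1 = true := by have := A1 j1; rwa [e1] at this
    have fx2 : f x2 = true := by have := A2 j1; rwa [e2] at this
    have hpeq : px x1 = px x2 := by
      have b1 := B1 j1 a; rw [e1, ea1] at b1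
      have b2 := B2 j1 a; rw [e2, ea2] at b2
      rw [b1, b2]
    obtain ⟨hpU, hpc1⟩ := hpx x1 fx1
    obtain ⟨-, hpc2⟩ := hpx x2 fx2
    rw [← hpeq] at hpc2
    set p := px x1 with hp
    -- p i1 = none and p i2 = none
    have pn1 : p i1 = none := by
      cases hpi : p i1 with
      | none => rfl
      | some b =>
        have c1 := hpc1 i1 b hpi
        have c2 := hpc2 i1 b hpi
        simp [hx1, hx2, hii] at c1 c2
        rw [c2] at c1
        exact absurd c1 (by simp)
    -- p consistent with row j1
    have hpc : Consistent p (row j1) := by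
      intro i b hib
      by_cases hii1 : i = i1
      · rw [hii1] at hib; rw [pn1] at hib; exact absurd hib (by simp)
      · have := hpc1 i b hib
        simpa [hx1, hii1] using this
    have fx : f (row j1) = true := hU.1 p hpU (row j1) hpc
    obtain ⟨hqU, hqc⟩ := hpx (row j1) fx
    have hqp : px (row j1) = p := by
      by_contra hne'
      exact hU.2.2 _ hqU _ hpU hne' ⟨row j1, hqc, hpc⟩
    have key : ∀ j : Fin 3, px (row j) = p := by
      intro j
      by_cases hjj : j = j1
      · rw [hjj]; exact hqp
      · have := B1 j j1
        rw [row_flip_ne w j1 j i1 hjj, e1] at this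
        exact this
    refine ⟨fun j => ?_, fun j j' => by rw [key j, key j']⟩
    by_cases hjj : j = j1
    · rw [hjj]; exact fx
    · have := A1 j; rwa [row_flip_ne w j1 j i1 hjj] at this
  · -- different rows
    obtain ⟨j3, h31, h32⟩ := fin3_third j1 j2
    have key : ∀ j : Fin 3, px (row j) = px (row j3) := by
      intro j
      by_cases hjj : j = j1
      · have := B2 j j3
        rwa [row_flip_ne w j2 j i2 (hjj ▸ hj), row_flip_ne w j2 j3 i2 h32] at this
      · have := B1 j j3
        rwa [row_flip_ne w j1 j i1 hjj, row_flip_ne w j1 j3 i1 h31] at this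
    refine ⟨fun j => ?_, fun j j' => by rw [key j, key j']⟩
    by_cases hjj : j = j1
    · have := A2 j; rwa [row_flip_ne w j2 j i2 (hjj ▸ hj)] at this
    · have := A1 j; rwa [row_flip_ne w j1 j i1 hjj] at this
end

section
/- Let f : {0,1}^n → {0,1} with an unambiguous collection U of 1-certificates each of size at most UC_1(f), and let f' be the desensitized version of f defined by f'(x,y,z)=1 iff f(x)=f(y)=f(z)=1 and p_x=p_y=p_z. Then the set U' = {(p,p,p) : p ∈ U} is an unambiguous collection of 1-certificates for f', and hence UC_1(f') ≤ 3·UC_1(f). -/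
/-- The tripled certificates `(p,p,p)` form an unambiguous collection of
1-certificates for the desensitized function `f'`, whence
`UC₁(f') ≤ 3·UC₁(f)`. -/
theorem desensitized_UC1_le_three_UC1 {n : ℕ} (f : (Fin n → Bool) → Bool)
    (U : Set (Fin n → Option Bool)) (hU : UnambColl f true U)
    (hsize : ∀ p ∈ U, suppCard p ≤ UC f true)
    (px : (Fin n → Bool) → (Fin n → Option Bool))
    (hpx : ∀ x, f x = true → px x ∈ U ∧ Consistent (px x) x)
    (f' : (Fin 3 × Fin n → Bool) → Bool)
    (hf' : ∀ w : Fin 3 × Fin n → Bool, f' w = true ↔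
      ((∀ j : Fin 3, f (fun i => w (j, i)) = true) ∧
       ∀ j j' : Fin 3, px (fun i => w (j, i)) = px (fun i => w (j', i)))) :
    UnambColl f' true {q | ∃ p ∈ U, q = fun ji : Fin 3 × Fin n => p ji.2} ∧
    (∀ q ∈ {q | ∃ p ∈ U, q = fun ji : Fin 3 × Fin n => p ji.2},
      suppCard q ≤ 3 * UC f true) ∧
    UC f' true ≤ 3 * UC f true := by
  -- auxiliary: uniqueness of consistent certificate
  obtain ⟨hU1, hU2, hU3⟩ := hU
  have uniq : ∀ p ∈ U, ∀ x, Consistent p x → p = px x := by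
    intro p hp x hcx
    have hfx : f x = true := hU1 p hp x hcx
    obtain ⟨hmem, hcons⟩ := hpx x hfx
    by_contra hne
    exact hU3 p hp (px x) hmem hne ⟨x, hcx, hcons⟩
  set U' : Set (Fin 3 × Fin n → Option Bool) :=
    {q | ∃ p ∈ U, q = fun ji : Fin 3 × Fin n => p ji.2} with hU'def
  have hcoll : UnambColl f' true U' := by
    refine ⟨?_, ?_, ?_⟩
    · rintro q ⟨p, hp, rfl⟩ y hy
      have hrow : ∀ j : Fin 3, Consistent p (fun i => y (j, i)) := by
        intro j i b hb; exact hy (j, i) b hb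
      have hpx' : ∀ j : Fin 3, px (fun i => y (j, i)) = p := by
        intro j; exact (uniq p hp _ (hrow j)).symm
      rw [hf']
      exact ⟨fun j => hU1 p hp _ (hrow j), fun j j' => by rw [hpx', hpx']⟩
    · intro w hw
      rw [hf'] at hw
      obtain ⟨hrows, heq⟩ := hw
      set p := px (fun i => w (0, i)) with hpdef
      obtain ⟨hmem, _⟩ := hpx _ (hrows 0)
      refine ⟨fun ji => p ji.2, ⟨p, hmem, rfl⟩, ?_⟩
      rintro ⟨j, i⟩ b hb
      have hj : px (fun i => w (j, i)) = p := (heq j 0).trans rfl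
      obtain ⟨_, hconsj⟩ := hpx _ (hrows j)
      rw [hj] at hconsj
      exact hconsj i b hb
    · rintro q ⟨p, hp, rfl⟩ q' ⟨p', hp', rfl⟩ hne ⟨y, hy, hy'⟩
      have hpne : p ≠ p' := by
        rintro rfl; exact hne rfl
      refine hU3 p hp p' hp' hpne ⟨fun i => y (0, i), ?_, ?_⟩
      · intro i b hb; exact hy (0, i) b hb
      · intro i b hb; exact hy' (0, i) b hb
  have hsz : ∀ q ∈ U', suppCard q ≤ 3 * UC f true := by
    rintro q ⟨p, hp, rfl⟩
    have hset : {ji : Fin 3 × Fin n | p ji.2 ≠ none} =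
        (Set.univ : Set (Fin 3)) ×ˢ {i : Fin n | p i ≠ none} := by
      ext ⟨j, i⟩; simp
    have : suppCard (fun ji : Fin 3 × Fin n => p ji.2) = 3 * suppCard p := by
      unfold suppCard
      rw [hset, Set.ncard_eq_toFinset_card', Set.ncard_eq_toFinset_card',
        Set.toFinset_prod, Finset.card_product]
      simp [Set.toFinset_univ]
    rw [this]
    exact Nat.mul_le_mul_left 3 (hsize p hp)
  refine ⟨hcoll, hsz, ?_⟩
  exact Nat.sInf_le ⟨U', hcoll, hsz⟩
end
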